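/- arXiv:2311.09015 — 2 statements merged into one kernel-verified Lean document; each statement's English description precedes it below -/
import Mathlib

section
/- Under the assumptions (i) M ⊥ R | X, G=2 (auxiliary-domain MAR), (ii) M ⊥ G | X (selection at random), and (iii) Y ⊥ R | X, M, G=1 (primary-domain outcome-independent missingness), the mean E[Y | G=1] equals E[ E[ g(X,M) | X, G=2, R=1 ] | G=1 ], where g(x,m) = E[Y | X=x, M=m, G=1, R=1]. -/
open Finset Set Real

noncomputable def Pr {Ω : Type*} [Fintype Ω] (μ : Ω → ℝ) (A : Set Ω) : ℝ :=
  ∑ ω, A.indicator μ ω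

noncomputable def cPr {Ω : Type*} [Fintype Ω] (μ : Ω → ℝ) (A B : Set Ω) : ℝ :=
  Pr μ (A ∩ B) / Pr μ B

noncomputable def cE {Ω : Type*} [Fintype Ω] (μ : Ω → ℝ) (f : Ω → ℝ) (B : Set Ω) : ℝ :=
  (∑ ω, B.indicator (fun ω' => μ ω' * f ω') ω) / Pr μ B

section Aux
variable {Ω : Type*} [Fintype Ω] (μ : Ω → ℝ)

lemma indsum (B : Set Ω) (h : Ω → ℝ) [DecidablePred (· ∈ B)] :
    ∑ ω, B.indicator h ω = ∑ ω ∈ Finset.univ.filter (· ∈ B), h ω := by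
  rw [Finset.sum_filter]
  exact Finset.sum_congr rfl fun ω _ => by simp [Set.indicator_apply]

lemma Pr_filter (B : Set Ω) [DecidablePred (· ∈ B)] :
    Pr μ B = ∑ ω ∈ Finset.univ.filter (· ∈ B), μ ω := indsum B μ

lemma Pr_nonneg (hμ0 : ∀ ω, 0 ≤ μ ω) (B : Set Ω) : 0 ≤ Pr μ B :=
  Finset.sum_nonneg fun ω _ => Set.indicator_nonneg (fun a _ => hμ0 a) ω

lemma Pr_mono (hμ0 : ∀ ω, 0 ≤ μ ω) {A B : Set Ω} (h : A ⊆ B) : Pr μ A ≤ Pr μ B :=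
  Finset.sum_le_sum fun ω _ => Set.indicator_le_indicator_of_subset h hμ0 ω

lemma fiber2 {κ : Type*} [DecidableEq κ] (c : Ω → κ) (B : Set Ω) (h : Ω → ℝ)
    [DecidablePred (· ∈ B)] :
    ∑ ω, B.indicator h ω =
      ∑ v ∈ Finset.univ.image c, ∑ ω, ({ω' | c ω' = v} ∩ B).indicator h ω := by
  classical
  rw [indsum]
  rw [← Finset.sum_fiberwise_of_maps_to (g := c) (t := Finset.univ.image c)
      (fun ω _ => Finset.mem_image_of_mem c (Finset.mem_univ ω)) h]
  refine Finset.sum_congr rfl fun v _ => ?_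
  rw [indsum, Finset.filter_filter]
  refine Finset.sum_congr ?_ fun _ _ => rfl
  ext ω; simp [and_comm]

lemma fiber_const {κ : Type*} [DecidableEq κ] (c : Ω → κ) (B : Set Ω) (φ : κ → ℝ)
    [DecidablePred (· ∈ B)] :
    ∑ ω, B.indicator (fun ω' => μ ω' * φ (c ω')) ω =
      ∑ v ∈ Finset.univ.image c, φ v * Pr μ ({ω' | c ω' = v} ∩ B) := by
  classical
  rw [fiber2 (c := c)]
  refine Finset.sum_congr rfl fun v _ => ?_
  rw [indsum, Pr_filter, Finset.mul_sum]
  refine Finset.sum_congr rfl fun ω hω => ?_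
  simp only [Finset.mem_filter, Set.mem_inter_iff, Set.mem_setOf_eq] at hω
  rw [hω.2.1]; ring

end Aux

theorem stmt0
    {Ω 𝓧 𝓜 : Type*} [Fintype Ω]
    (μ : Ω → ℝ) (X : Ω → 𝓧) (M : Ω → 𝓜) (Y : Ω → ℝ) (R G : Ω → ℕ)
    (hμ0 : ∀ ω, 0 ≤ μ ω) (hμ1 : ∑ ω, μ ω = 1)
    (hR : ∀ ω, R ω = 0 ∨ R ω = 1)
    (hG : ∀ ω, G ω = 1 ∨ G ω = 2)
    (hpos : ∀ x ∈ Set.range X, ∀ m ∈ Set.range M, ∀ y ∈ Set.range Y, ∀ r g : ℕ,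
      (r = 0 ∨ r = 1) → (g = 1 ∨ g = 2) →
      0 < Pr μ {ω | X ω = x ∧ M ω = m ∧ Y ω = y ∧ R ω = r ∧ G ω = g})
    (hMAR : ∀ (m : 𝓜) (r : ℕ) (x : 𝓧),
      0 < Pr μ {ω | X ω = x ∧ G ω = 2} →
      cPr μ {ω | M ω = m ∧ R ω = r} {ω | X ω = x ∧ G ω = 2} =
        cPr μ {ω | M ω = m} {ω | X ω = x ∧ G ω = 2} *
        cPr μ {ω | R ω = r} {ω | X ω = x ∧ G ω = 2})
    (hSel : ∀ (m : 𝓜) (g : ℕ) (x : 𝓧),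
      0 < Pr μ {ω | X ω = x} →
      cPr μ {ω | M ω = m ∧ G ω = g} {ω | X ω = x} =
        cPr μ {ω | M ω = m} {ω | X ω = x} * cPr μ {ω | G ω = g} {ω | X ω = x})
    (hCI : ∀ (y : ℝ) (r : ℕ) (x : 𝓧) (m : 𝓜),
      0 < Pr μ {ω | X ω = x ∧ M ω = m ∧ G ω = 1} →
      cPr μ {ω | Y ω = y ∧ R ω = r} {ω | X ω = x ∧ M ω = m ∧ G ω = 1} =
        cPr μ {ω | Y ω = y} {ω | X ω = x ∧ M ω = m ∧ G ω = 1} *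
        cPr μ {ω | R ω = r} {ω | X ω = x ∧ M ω = m ∧ G ω = 1})
 :
    cE μ Y {ω | G ω = 1} =
      cE μ (fun ω =>
        cE μ (fun ω' =>
          cE μ Y {ω'' | X ω'' = X ω' ∧ M ω'' = M ω' ∧ G ω'' = 1 ∧ R ω'' = 1})
          {ω' | X ω' = X ω ∧ G ω' = 2 ∧ R ω' = 1})
        {ω | G ω = 1} := by
  classical
  rcases isEmpty_or_nonempty Ω with hE | hNE
  · simp [cE, Pr, Finset.univ_eq_empty]
  obtain ⟨ω0⟩ := hNE
  -- atom positivity (Y marginalized out)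
  have posa : ∀ x ∈ Set.range X, ∀ m ∈ Set.range M, ∀ r g : ℕ,
      (r = 0 ∨ r = 1) → (g = 1 ∨ g = 2) →
      0 < Pr μ {ω | X ω = x ∧ M ω = m ∧ R ω = r ∧ G ω = g} := by
    intro x hx m hm r g hr hg
    refine lt_of_lt_of_le (hpos x hx m hm (Y ω0) ⟨ω0, rfl⟩ r g hr hg) (Pr_mono μ hμ0 ?_)
    intro ω hω; simp only [Set.mem_setOf_eq] at hω ⊢; tauto
  have Ppos : ∀ x ∈ Set.range X, ∀ m ∈ Set.range M, ∀ r g : ℕ,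
      (r = 0 ∨ r = 1) → (g = 1 ∨ g = 2) → ∀ (A : Set Ω),
      {ω | X ω = x ∧ M ω = m ∧ R ω = r ∧ G ω = g} ⊆ A → 0 < Pr μ A :=
    fun x hx m hm r g hr hg A hsub =>
      lt_of_lt_of_le (posa x hx m hm r g hr hg) (Pr_mono μ hμ0 hsub)
  have hm0 : M ω0 ∈ Set.range M := ⟨ω0, rfl⟩
  -- specific positivity facts
  have pG1 : 0 < Pr μ {ω | G ω = 1} :=
    Ppos _ ⟨ω0, rfl⟩ _ hm0 1 1 (Or.inr rfl) (Or.inl rfl) _ (fun ω h => h.2.2.2)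
  have Px : ∀ x ∈ Set.range X, 0 < Pr μ {ω | X ω = x} :=
    fun x hx => Ppos x hx _ hm0 1 1 (Or.inr rfl) (Or.inl rfl) _ (fun ω h => h.1)
  have pXG1 : ∀ x ∈ Set.range X, 0 < Pr μ {ω | X ω = x ∧ G ω = 1} :=
    fun x hx => Ppos x hx _ hm0 1 1 (Or.inr rfl) (Or.inl rfl) _ (fun ω h => ⟨h.1, h.2.2.2⟩)
  have pXG2 : ∀ x ∈ Set.range X, 0 < Pr μ {ω | X ω = x ∧ G ω = 2} :=
    fun x hx => Ppos x hx _ hm0 1 2 (Or.inr rfl) (Or.inr rfl) _ (fun ω h => ⟨h.1, h.2.2.2⟩)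
  have pBx : ∀ x ∈ Set.range X, 0 < Pr μ {ω | X ω = x ∧ G ω = 2 ∧ R ω = 1} :=
    fun x hx => Ppos x hx _ hm0 1 2 (Or.inr rfl) (Or.inr rfl) _
      (fun ω h => ⟨h.1, h.2.2.2, h.2.2.1⟩)
  have pA1 : ∀ x ∈ Set.range X, ∀ m ∈ Set.range M,
      0 < Pr μ {ω | X ω = x ∧ M ω = m ∧ G ω = 1} :=
    fun x hx m hm => Ppos x hx m hm 1 1 (Or.inr rfl) (Or.inl rfl) _
      (fun ω h => ⟨h.1, h.2.1, h.2.2.2⟩)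
  have pA1R : ∀ x ∈ Set.range X, ∀ m ∈ Set.range M,
      0 < Pr μ {ω | X ω = x ∧ M ω = m ∧ G ω = 1 ∧ R ω = 1} :=
    fun x hx m hm => Ppos x hx m hm 1 1 (Or.inr rfl) (Or.inl rfl) _
      (fun ω h => ⟨h.1, h.2.1, h.2.2.2, h.2.2.1⟩)
  -- selection lemma: P(x,m,G1) * P(x,G2) = P(x,m,G2) * P(x,G1)
  have sel : ∀ x ∈ Set.range X, ∀ (m : 𝓜),
      Pr μ {ω | X ω = x ∧ M ω = m ∧ G ω = 1} * Pr μ {ω | X ω = x ∧ G ω = 2} =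
      Pr μ {ω | X ω = x ∧ M ω = m ∧ G ω = 2} * Pr μ {ω | X ω = x ∧ G ω = 1} := by
    intro x hx m
    have hd := (Px x hx).ne'
    have s : ∀ g : ℕ,
        Pr μ {ω | X ω = x ∧ M ω = m ∧ G ω = g} * Pr μ {ω | X ω = x} =
        Pr μ {ω | X ω = x ∧ M ω = m} * Pr μ {ω | X ω = x ∧ G ω = g} := by
      intro g
      have h := hSel m g x (Px x hx)
      unfold cPr at h
      rw [show {ω | M ω = m ∧ G ω = g} ∩ {ω | X ω = x} = {ω | X ω = x ∧ M ω = m ∧ G ω = g}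
            from by ext ω; simp only [Set.mem_inter_iff, Set.mem_setOf_eq]; tauto,
          show {ω | M ω = m} ∩ {ω | X ω = x} = {ω | X ω = x ∧ M ω = m}
            from by ext ω; simp only [Set.mem_inter_iff, Set.mem_setOf_eq]; tauto,
          show {ω | G ω = g} ∩ {ω | X ω = x} = {ω | X ω = x ∧ G ω = g}
            from by ext ω; simp only [Set.mem_inter_iff, Set.mem_setOf_eq]; tauto] at h
      rw [div_mul_div_comm, div_eq_div_iff hd (mul_ne_zero hd hd)] at h
      exact mul_right_cancel₀ hd (by linear_combination h)
    have s1 := s 1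
    have s2 := s 2
    exact mul_right_cancel₀ hd (by
      linear_combination Pr μ {ω | X ω = x ∧ G ω = 2} * s1 -
        Pr μ {ω | X ω = x ∧ G ω = 1} * s2)
  -- MAR lemma: P(x,m,G2,R1) * P(x,G2) = P(x,m,G2) * P(x,G2,R1)
  have mar : ∀ x ∈ Set.range X, ∀ (m : 𝓜),
      Pr μ {ω | X ω = x ∧ M ω = m ∧ G ω = 2 ∧ R ω = 1} * Pr μ {ω | X ω = x ∧ G ω = 2} =
      Pr μ {ω | X ω = x ∧ M ω = m ∧ G ω = 2} * Pr μ {ω | X ω = x ∧ G ω = 2 ∧ R ω = 1} := by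
    intro x hx m
    have h := hMAR m 1 x (pXG2 x hx)
    unfold cPr at h
    rw [show {ω | M ω = m ∧ R ω = 1} ∩ {ω | X ω = x ∧ G ω = 2} =
          {ω | X ω = x ∧ M ω = m ∧ G ω = 2 ∧ R ω = 1}
          from by ext ω; simp only [Set.mem_inter_iff, Set.mem_setOf_eq]; tauto,
        show {ω | M ω = m} ∩ {ω | X ω = x ∧ G ω = 2} = {ω | X ω = x ∧ M ω = m ∧ G ω = 2}
          from by ext ω; simp only [Set.mem_inter_iff, Set.mem_setOf_eq]; tauto,
        show {ω | R ω = 1} ∩ {ω | X ω = x ∧ G ω = 2} = {ω | X ω = x ∧ G ω = 2 ∧ R ω = 1}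
          from by ext ω; simp only [Set.mem_inter_iff, Set.mem_setOf_eq]; tauto] at h
    have hd := (pXG2 x hx).ne'
    rw [div_mul_div_comm, div_eq_div_iff hd (mul_ne_zero hd hd)] at h
    exact mul_right_cancel₀ hd (by linear_combination h)
  -- combined key: P(x,m,G1) * P(x,G2,R1) = P(x,m,G2,R1) * P(x,G1)
  have key : ∀ x ∈ Set.range X, ∀ (m : 𝓜),
      Pr μ {ω | X ω = x ∧ M ω = m ∧ G ω = 1} * Pr μ {ω | X ω = x ∧ G ω = 2 ∧ R ω = 1} =
      Pr μ {ω | X ω = x ∧ M ω = m ∧ G ω = 2 ∧ R ω = 1} * Pr μ {ω | X ω = x ∧ G ω = 1} := by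
    intro x hx m
    exact mul_right_cancel₀ (pXG2 x hx).ne' (by
      linear_combination Pr μ {ω | X ω = x ∧ G ω = 2 ∧ R ω = 1} * sel x hx m -
        Pr μ {ω | X ω = x ∧ G ω = 1} * mar x hx m)
  -- CI lemma: S(Y, A1R) * P(A1) = S(Y, A1) * P(A1R)
  have ci : ∀ x ∈ Set.range X, ∀ m ∈ Set.range M,
      (∑ ω, ({ω | X ω = x ∧ M ω = m ∧ G ω = 1 ∧ R ω = 1}).indicator
          (fun ω' => μ ω' * Y ω') ω) * Pr μ {ω | X ω = x ∧ M ω = m ∧ G ω = 1} =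
      (∑ ω, ({ω | X ω = x ∧ M ω = m ∧ G ω = 1}).indicator
          (fun ω' => μ ω' * Y ω') ω) * Pr μ {ω | X ω = x ∧ M ω = m ∧ G ω = 1 ∧ R ω = 1} := by
    intro x hx m hm
    have e1 : (∑ ω, ({ω | X ω = x ∧ M ω = m ∧ G ω = 1 ∧ R ω = 1}).indicator
          (fun ω' => μ ω' * Y ω') ω) =
        ∑ y ∈ Finset.univ.image Y,
          y * Pr μ ({ω' | Y ω' = y} ∩ {ω | X ω = x ∧ M ω = m ∧ G ω = 1 ∧ R ω = 1}) :=
      fiber_const μ Y _ (fun y => y)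
    have e0 : (∑ ω, ({ω | X ω = x ∧ M ω = m ∧ G ω = 1}).indicator
          (fun ω' => μ ω' * Y ω') ω) =
        ∑ y ∈ Finset.univ.image Y,
          y * Pr μ ({ω' | Y ω' = y} ∩ {ω | X ω = x ∧ M ω = m ∧ G ω = 1}) :=
      fiber_const μ Y _ (fun y => y)
    rw [e1, e0, Finset.sum_mul, Finset.sum_mul]
    refine Finset.sum_congr rfl fun y _ => ?_
    have h := hCI y 1 x m (pA1 x hx m hm)
    unfold cPr at h
    rw [show {ω | Y ω = y ∧ R ω = 1} ∩ {ω | X ω = x ∧ M ω = m ∧ G ω = 1} =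
          {ω' | Y ω' = y} ∩ {ω | X ω = x ∧ M ω = m ∧ G ω = 1 ∧ R ω = 1}
          from by ext ω; simp only [Set.mem_inter_iff, Set.mem_setOf_eq]; tauto,
        show {ω | R ω = 1} ∩ {ω | X ω = x ∧ M ω = m ∧ G ω = 1} =
          {ω | X ω = x ∧ M ω = m ∧ G ω = 1 ∧ R ω = 1}
          from by ext ω; simp only [Set.mem_inter_iff, Set.mem_setOf_eq]; tauto] at h
    have hd := (pA1 x hx m hm).ne'
    rw [div_mul_div_comm, div_eq_div_iff hd (mul_ne_zero hd hd)] at h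
    have hy : Pr μ ({ω' | Y ω' = y} ∩ {ω | X ω = x ∧ M ω = m ∧ G ω = 1 ∧ R ω = 1}) *
        Pr μ {ω | X ω = x ∧ M ω = m ∧ G ω = 1} =
        Pr μ ({ω' | Y ω' = y} ∩ {ω | X ω = x ∧ M ω = m ∧ G ω = 1}) *
        Pr μ {ω | X ω = x ∧ M ω = m ∧ G ω = 1 ∧ R ω = 1} :=
      mul_right_cancel₀ hd (by linear_combination h)
    linear_combination y * hy
  -- main computation
  set H : 𝓧 → ℝ := fun x =>
    cE μ (fun ω' =>
        cE μ Y {ω'' | X ω'' = X ω' ∧ M ω'' = M ω' ∧ G ω'' = 1 ∧ R ω'' = 1})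
      {ω' | X ω' = x ∧ G ω' = 2 ∧ R ω' = 1} with hH
  show cE μ Y {ω | G ω = 1} = cE μ (fun ω => H (X ω)) {ω | G ω = 1}
  unfold cE
  congr 1
  have eR : (∑ ω, ({ω | G ω = 1} : Set Ω).indicator (fun ω' => μ ω' * H (X ω')) ω) =
      ∑ x ∈ Finset.univ.image X, H x * Pr μ ({ω' | X ω' = x} ∩ {ω | G ω = 1}) :=
    fiber_const μ X _ H
  rw [eR, fiber2 X {ω | G ω = 1} (fun ω' => μ ω' * Y ω')]
  refine Finset.sum_congr rfl fun x hxi => ?_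
  have hx : x ∈ Set.range X := by
    rcases Finset.mem_image.mp hxi with ⟨ω, _, rfl⟩; exact ⟨ω, rfl⟩
  rw [show ({ω' | X ω' = x} ∩ {ω | G ω = 1}) = {ω | X ω = x ∧ G ω = 1}
        from by ext ω; simp only [Set.mem_inter_iff, Set.mem_setOf_eq]]
  -- now: S(Y, {X=x,G=1}) = H x * P(x,G1)
  -- decompose LHS over M fibers
  rw [fiber2 M {ω | X ω = x ∧ G ω = 1} (fun ω' => μ ω' * Y ω')]
  -- compute H x numerator over M fibers
  have hHnum : (∑ ω', ({ω' | X ω' = x ∧ G ω' = 2 ∧ R ω' = 1} : Set Ω).indicator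
      (fun ω2 => μ ω2 *
        cE μ Y {ω'' | X ω'' = X ω2 ∧ M ω'' = M ω2 ∧ G ω'' = 1 ∧ R ω'' = 1}) ω') =
      ∑ m ∈ Finset.univ.image M,
        cE μ Y {ω'' | X ω'' = x ∧ M ω'' = m ∧ G ω'' = 1 ∧ R ω'' = 1} *
          Pr μ ({ω' | M ω' = m} ∩ {ω' | X ω' = x ∧ G ω' = 2 ∧ R ω' = 1}) := by
    rw [fiber2 M {ω' | X ω' = x ∧ G ω' = 2 ∧ R ω' = 1}]
    refine Finset.sum_congr rfl fun m _ => ?_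
    rw [indsum, Pr_filter, Finset.mul_sum]
    refine Finset.sum_congr rfl fun ω hω => ?_
    simp only [Finset.mem_filter, Set.mem_inter_iff, Set.mem_setOf_eq] at hω
    rw [hω.2.1, hω.2.2.1]
    ring
  have hHval : H x = (∑ m ∈ Finset.univ.image M,
        cE μ Y {ω'' | X ω'' = x ∧ M ω'' = m ∧ G ω'' = 1 ∧ R ω'' = 1} *
          Pr μ ({ω' | M ω' = m} ∩ {ω' | X ω' = x ∧ G ω' = 2 ∧ R ω' = 1})) /
      Pr μ {ω' | X ω' = x ∧ G ω' = 2 ∧ R ω' = 1} := by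
    rw [show H x = (∑ ω', ({ω' | X ω' = x ∧ G ω' = 2 ∧ R ω' = 1} : Set Ω).indicator
      (fun ω2 => μ ω2 *
        cE μ Y {ω'' | X ω'' = X ω2 ∧ M ω'' = M ω2 ∧ G ω'' = 1 ∧ R ω'' = 1}) ω') /
      Pr μ {ω' | X ω' = x ∧ G ω' = 2 ∧ R ω' = 1} from rfl, hHnum]
  rw [hHval, div_mul_eq_mul_div, eq_div_iff (pBx x hx).ne', Finset.sum_mul, Finset.sum_mul]
  refine Finset.sum_congr rfl fun m hmi => ?_
  have hm : m ∈ Set.range M := by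
    rcases Finset.mem_image.mp hmi with ⟨ω, _, rfl⟩; exact ⟨ω, rfl⟩
  -- per-m identity
  rw [show ({ω' | M ω' = m} ∩ {ω | X ω = x ∧ G ω = 1}) = {ω | X ω = x ∧ M ω = m ∧ G ω = 1}
        from by ext ω; simp only [Set.mem_inter_iff, Set.mem_setOf_eq]; tauto,
      show ({ω' | M ω' = m} ∩ {ω' | X ω' = x ∧ G ω' = 2 ∧ R ω' = 1}) =
        {ω | X ω = x ∧ M ω = m ∧ G ω = 2 ∧ R ω = 1}
        from by ext ω; simp only [Set.mem_inter_iff, Set.mem_setOf_eq]; tauto]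
  -- abbreviations
  have hgm : cE μ Y {ω'' | X ω'' = x ∧ M ω'' = m ∧ G ω'' = 1 ∧ R ω'' = 1} =
      (∑ ω, ({ω | X ω = x ∧ M ω = m ∧ G ω = 1 ∧ R ω = 1}).indicator
        (fun ω' => μ ω' * Y ω') ω) /
      Pr μ {ω | X ω = x ∧ M ω = m ∧ G ω = 1 ∧ R ω = 1} := rfl
  rw [hgm, div_mul_eq_mul_div, div_mul_eq_mul_div, eq_div_iff (pA1R x hx m hm).ne']
  have hci := ci x hx m hm
  have hkey := key x hx m
  exact mul_right_cancel₀ (pA1 x hx m hm).ne' (by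
    linear_combination
      (-(Pr μ {ω | X ω = x ∧ M ω = m ∧ G ω = 2 ∧ R ω = 1} *
        Pr μ {ω | X ω = x ∧ G ω = 1})) * hci +
      ((∑ ω, ({ω | X ω = x ∧ M ω = m ∧ G ω = 1}).indicator (fun ω' => μ ω' * Y ω') ω) *
        Pr μ {ω | X ω = x ∧ M ω = m ∧ G ω = 1 ∧ R ω = 1}) * hkey)
end

section
/- If M ⊥ R | X, Y, G=1, then the odds ratio OR(y,x,m) = [p(Y=y | R=0, X=x, M=m, G=1) / p(Y=y | R=1, X=x, M=m, G=1)] · [p(Y=0 | R=1, X=x, M=m, G=1) / p(Y=0 | R=0, X=x, M=m, G=1)] does not depend on m; indeed it equals [p(R=0 | X=x, Y=y, G=1)/p(R=1 | X=x, Y=y, G=1)] · [p(R=1 | X=x, Y=0, G=1)/p(R=0 | X=x, Y=0, G=1)]. -/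
open Finset Set Real

noncomputable def OddsR {Ω 𝓧 : Type*} [Fintype Ω] (μ : Ω → ℝ) (X : Ω → 𝓧) (Y : Ω → ℝ)
    (R G : Ω → ℕ) (x : 𝓧) (y : ℝ) : ℝ :=
  (cPr μ {ω | R ω = 0} {ω | X ω = x ∧ Y ω = y ∧ G ω = 1} *
      cPr μ {ω | R ω = 1} {ω | X ω = x ∧ Y ω = 0 ∧ G ω = 1}) /
  (cPr μ {ω | R ω = 1} {ω | X ω = x ∧ Y ω = y ∧ G ω = 1} *
      cPr μ {ω | R ω = 0} {ω | X ω = x ∧ Y ω = 0 ∧ G ω = 1})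

/-! Conditional independence `M ⊥ R | X, Y, G = 1` says that conditioning additionally on
`M = m` does not change the odds of `R = 0` against `R = 1` given `X = x, Y = y, G = 1`.
By Bayes' rule the odds ratio of `Y = y` against `Y = 0` between the strata `R = 0` and
`R = 1` equals the odds ratio of `R = 0` against `R = 1` between the strata `Y = y` and
`Y = 0`; within `M = m` the latter is, by the first remark, the same as without `M`. -/

section
variable {Ω : Type*} [Fintype Ω] {μ : Ω → ℝ} {A B B' C : Set Ω}

lemma Pr_pos_of_subset (hμ : ∀ ω, 0 ≤ μ ω) (hA : 0 < Pr μ A) (hAB : A ⊆ B) : 0 < Pr μ B :=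
  hA.trans_le <| Finset.sum_le_sum fun ω _ => Set.indicator_le_indicator_of_subset hAB hμ ω

lemma cPr_div_cPr_mul_cPr_div_cPr (A' : Set Ω) (hB : Pr μ B ≠ 0) (hB' : Pr μ B' ≠ 0) :
    cPr μ A B / cPr μ A B' * (cPr μ A' B' / cPr μ A' B) =
      Pr μ (A ∩ B) / Pr μ (A ∩ B') * (Pr μ (A' ∩ B') / Pr μ (A' ∩ B)) := by
  unfold cPr
  field_simp

lemma Pr_inter_div_Pr_inter_of_condIndep (hB : cPr μ (A ∩ B) C = cPr μ A C * cPr μ B C)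
    (hB' : cPr μ (A ∩ B') C = cPr μ A C * cPr μ B' C) (hA : cPr μ A C ≠ 0) :
    Pr μ (A ∩ B ∩ C) / Pr μ (A ∩ B' ∩ C) = Pr μ (B ∩ C) / Pr μ (B' ∩ C) := by
  have hC : Pr μ C ≠ 0 := (div_ne_zero_iff.mp hA).2
  calc Pr μ (A ∩ B ∩ C) / Pr μ (A ∩ B' ∩ C) = cPr μ (A ∩ B) C / cPr μ (A ∩ B') C :=
        (div_div_div_cancel_right₀ hC _ _).symm
    _ = cPr μ B C / cPr μ B' C := by rw [hB, hB', mul_div_mul_left _ _ hA]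
    _ = Pr μ (B ∩ C) / Pr μ (B' ∩ C) := div_div_div_cancel_right₀ hC _ _

end

lemma Pr_div_Pr_eq_of_condIndep {Ω 𝓧 𝓜 : Type*} [Fintype Ω] {μ : Ω → ℝ} {X : Ω → 𝓧}
    {M : Ω → 𝓜} {Y : Ω → ℝ} {R G : Ω → ℕ} {x : 𝓧} {m : 𝓜} {y : ℝ} (hμ : ∀ ω, 0 ≤ μ ω)
    (hatom : 0 < Pr μ {ω | X ω = x ∧ M ω = m ∧ Y ω = y ∧ R ω = 0 ∧ G ω = 1})
    (hCI : ∀ r : ℕ, cPr μ {ω | M ω = m ∧ R ω = r} {ω | X ω = x ∧ Y ω = y ∧ G ω = 1} =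
      cPr μ {ω | M ω = m} {ω | X ω = x ∧ Y ω = y ∧ G ω = 1} *
        cPr μ {ω | R ω = r} {ω | X ω = x ∧ Y ω = y ∧ G ω = 1}) :
    Pr μ ({ω | Y ω = y} ∩ {ω | R ω = 0 ∧ X ω = x ∧ M ω = m ∧ G ω = 1}) /
        Pr μ ({ω | Y ω = y} ∩ {ω | R ω = 1 ∧ X ω = x ∧ M ω = m ∧ G ω = 1}) =
      Pr μ ({ω | R ω = 0} ∩ {ω | X ω = x ∧ Y ω = y ∧ G ω = 1}) /
        Pr μ ({ω | R ω = 1} ∩ {ω | X ω = x ∧ Y ω = y ∧ G ω = 1}) := by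
  have hC : 0 < Pr μ {ω | X ω = x ∧ Y ω = y ∧ G ω = 1} :=
    Pr_pos_of_subset hμ hatom fun _ ⟨hx, _, hy, _, hg⟩ => ⟨hx, hy, hg⟩
  have hM : 0 < Pr μ ({ω | M ω = m} ∩ {ω | X ω = x ∧ Y ω = y ∧ G ω = 1}) :=
    Pr_pos_of_subset hμ hatom fun _ ⟨hx, hm, hy, _, hg⟩ => ⟨hm, hx, hy, hg⟩
  have hsplit : ∀ r : ℕ, {ω | Y ω = y} ∩ {ω | R ω = r ∧ X ω = x ∧ M ω = m ∧ G ω = 1} =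
      {ω | M ω = m} ∩ {ω | R ω = r} ∩ {ω | X ω = x ∧ Y ω = y ∧ G ω = 1} := by
    intro r; ext ω; simp only [mem_inter_iff, mem_ofPred_eq]; tauto
  rw [hsplit, hsplit]
  exact Pr_inter_div_Pr_inter_of_condIndep (hCI 0) (hCI 1) (div_pos hM hC).ne'

theorem stmt1_general
    {Ω 𝓧 𝓜 : Type*} [Fintype Ω]
    (μ : Ω → ℝ) (X : Ω → 𝓧) (M : Ω → 𝓜) (Y : Ω → ℝ) (R G : Ω → ℕ)
    (hμ0 : ∀ ω, 0 ≤ μ ω)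
    (h0Y : (0 : ℝ) ∈ Set.range Y)
    (hpos : ∀ x ∈ Set.range X, ∀ m ∈ Set.range M, ∀ y ∈ Set.range Y, ∀ r : ℕ,
      (r = 0 ∨ r = 1) →
      0 < Pr μ {ω | X ω = x ∧ M ω = m ∧ Y ω = y ∧ R ω = r ∧ G ω = 1})
    (hCI : ∀ (m : 𝓜) (r : ℕ) (x : 𝓧) (y : ℝ),
      0 < Pr μ {ω | X ω = x ∧ Y ω = y ∧ G ω = 1} →
      cPr μ {ω | M ω = m ∧ R ω = r} {ω | X ω = x ∧ Y ω = y ∧ G ω = 1} =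
        cPr μ {ω | M ω = m} {ω | X ω = x ∧ Y ω = y ∧ G ω = 1} *
        cPr μ {ω | R ω = r} {ω | X ω = x ∧ Y ω = y ∧ G ω = 1})
 :
    ∀ x ∈ Set.range X, ∀ y ∈ Set.range Y, ∀ m ∈ Set.range M,
      (cPr μ {ω | Y ω = y} {ω | R ω = 0 ∧ X ω = x ∧ M ω = m ∧ G ω = 1} /
          cPr μ {ω | Y ω = y} {ω | R ω = 1 ∧ X ω = x ∧ M ω = m ∧ G ω = 1}) *
        (cPr μ {ω | Y ω = 0} {ω | R ω = 1 ∧ X ω = x ∧ M ω = m ∧ G ω = 1} /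
          cPr μ {ω | Y ω = 0} {ω | R ω = 0 ∧ X ω = x ∧ M ω = m ∧ G ω = 1}) =
      OddsR μ X Y R G x y := by
  intro x hx y hy m hm
  set B : ℕ → Set Ω := fun r => {ω | R ω = r ∧ X ω = x ∧ M ω = m ∧ G ω = 1}
  set C : ℝ → Set Ω := fun y' => {ω | X ω = x ∧ Y ω = y' ∧ G ω = 1}
  have atom := hpos x hx m hm
  have hB : ∀ r, r = 0 ∨ r = 1 → Pr μ (B r) ≠ 0 := fun r hr =>
    (Pr_pos_of_subset hμ0 (atom y hy r hr) fun _ ⟨hx, hm, _, hr, hg⟩ =>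
      by exact ⟨hr, hx, hm, hg⟩).ne'
  have hC : ∀ y' ∈ range Y, 0 < Pr μ (C y') := fun y' hy' =>
    Pr_pos_of_subset hμ0 (atom y' hy' 0 (.inl rfl)) fun _ ⟨hx, _, hy, _, hg⟩ =>
      by exact ⟨hx, hy, hg⟩
  have odds : ∀ y' ∈ range Y, Pr μ ({ω | Y ω = y'} ∩ B 0) / Pr μ ({ω | Y ω = y'} ∩ B 1) =
      Pr μ ({ω | R ω = 0} ∩ C y') / Pr μ ({ω | R ω = 1} ∩ C y') := fun y' hy' =>
    Pr_div_Pr_eq_of_condIndep hμ0 (atom y' hy' 0 (.inl rfl)) fun r => hCI m r x y' (hC y' hy')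
  calc _ = Pr μ ({ω | Y ω = y} ∩ B 0) / Pr μ ({ω | Y ω = y} ∩ B 1) *
          (Pr μ ({ω | Y ω = 0} ∩ B 1) / Pr μ ({ω | Y ω = 0} ∩ B 0)) :=
        cPr_div_cPr_mul_cPr_div_cPr _ (hB 0 (.inl rfl)) (hB 1 (.inr rfl))
    _ = Pr μ ({ω | R ω = 0} ∩ C y) / Pr μ ({ω | R ω = 1} ∩ C y) *
          (Pr μ ({ω | R ω = 1} ∩ C 0) / Pr μ ({ω | R ω = 0} ∩ C 0)) := by
        rw [odds y hy, ← inv_div (Pr μ ({ω | R ω = 0} ∩ C 0)), ← odds 0 h0Y, inv_div]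
    _ = OddsR μ X Y R G x y := by
        rw [OddsR, mul_div_mul_comm, cPr, cPr, cPr, cPr,
          div_div_div_cancel_right₀ (hC y hy).ne', div_div_div_cancel_right₀ (hC 0 h0Y).ne']

theorem stmt1
    {Ω 𝓧 𝓜 : Type*} [Fintype Ω]
    (μ : Ω → ℝ) (X : Ω → 𝓧) (M : Ω → 𝓜) (Y : Ω → ℝ) (R G : Ω → ℕ)
    (hμ0 : ∀ ω, 0 ≤ μ ω) (hμ1 : ∑ ω, μ ω = 1)
    (hR : ∀ ω, R ω = 0 ∨ R ω = 1)
    (h0Y : (0 : ℝ) ∈ Set.range Y)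
    (hpos : ∀ x ∈ Set.range X, ∀ m ∈ Set.range M, ∀ y ∈ Set.range Y, ∀ r : ℕ,
      (r = 0 ∨ r = 1) →
      0 < Pr μ {ω | X ω = x ∧ M ω = m ∧ Y ω = y ∧ R ω = r ∧ G ω = 1})
    (hCI : ∀ (m : 𝓜) (r : ℕ) (x : 𝓧) (y : ℝ),
      0 < Pr μ {ω | X ω = x ∧ Y ω = y ∧ G ω = 1} →
      cPr μ {ω | M ω = m ∧ R ω = r} {ω | X ω = x ∧ Y ω = y ∧ G ω = 1} =
        cPr μ {ω | M ω = m} {ω | X ω = x ∧ Y ω = y ∧ G ω = 1} *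
        cPr μ {ω | R ω = r} {ω | X ω = x ∧ Y ω = y ∧ G ω = 1})
 :
    ∀ x ∈ Set.range X, ∀ y ∈ Set.range Y, ∀ m ∈ Set.range M,
      (cPr μ {ω | Y ω = y} {ω | R ω = 0 ∧ X ω = x ∧ M ω = m ∧ G ω = 1} /
          cPr μ {ω | Y ω = y} {ω | R ω = 1 ∧ X ω = x ∧ M ω = m ∧ G ω = 1}) *
        (cPr μ {ω | Y ω = 0} {ω | R ω = 1 ∧ X ω = x ∧ M ω = m ∧ G ω = 1} /
          cPr μ {ω | Y ω = 0} {ω | R ω = 0 ∧ X ω = x ∧ M ω = m ∧ G ω = 1}) =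
      OddsR μ X Y R G x y :=
  stmt1_general μ X M Y R G hμ0 h0Y hpos hCI
end
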